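/- Suppose for a function Ψ: ℝⁿ → ℝᵐ of the form Ψ(x) = N_{Ψx} x + N_{Ψxφ} φ(v(x)) + b, with v(x) = N_{vx} x + N_{vxφ} φ(v(x)) + b_φ well-defined, and φ coordinatewise slope-restricted on [α, β]. If there exist L > 0 and diagonal T ⪰ 0 such that for all pairs (Δx, Δx_φ) satisfying the quadratic constraint [Δv; Δx_φ]ᵀ [[-2αβT, (α+β)T], [(α+β)T, -2T]] [Δv; Δx_φ] ≥ 0 with Δv = N_{vx}Δx + N_{vxφ}Δx_φ, we have ‖N_{Ψx}Δx + N_{Ψxφ}Δx_φ‖² ≤ L²‖Δx‖², then Ψ is L-Lipschitz. Moreover, the matrix inequality of Theorem 1 (LipSDP) implies this implication via the S-procedure. -/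

import Mathlib

open Matrix

section LipSDPAux

lemma lipsdp_qform_eq {p : ℕ} (α β : ℝ) (lam a c : Fin p → ℝ) :
    Sum.elim a c ⬝ᵥ (Matrix.fromBlocks ((-2*α*β) • Matrix.diagonal lam)
      ((α+β) • Matrix.diagonal lam) ((α+β) • Matrix.diagonal lam)
      ((-2:ℝ) • Matrix.diagonal lam)).mulVec (Sum.elim a c)
    = ∑ i, 2 * lam i * (c i - α * a i) * (β * a i - c i) := by
  rw [Matrix.fromBlocks_mulVec]
  simp only [Sum.elim_comp_inl, Sum.elim_comp_inr]
  rw [sumElim_dotProduct_sumElim]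
  simp only [dotProduct, Matrix.smul_mulVec, Pi.add_apply, Pi.smul_apply,
    Matrix.mulVec_diagonal, smul_eq_mul, ← Finset.sum_add_distrib]
  exact Finset.sum_congr rfl fun i _ => by ring

lemma lipsdp_perf_form {n p m : ℕ} (L : ℝ) (NΨx : Matrix (Fin m) (Fin n) ℝ)
    (NΨxφ : Matrix (Fin m) (Fin p) ℝ) (Δx : Fin n → ℝ) (Δxφ : Fin p → ℝ) :
    Sum.elim Δx Δxφ ⬝ᵥ (Matrix.fromBlocks (NΨxᵀ * NΨx - (L ^ 2) • (1 : Matrix (Fin n) (Fin n) ℝ))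
      (NΨxᵀ * NΨxφ) (NΨxφᵀ * NΨx) (NΨxφᵀ * NΨxφ)).mulVec (Sum.elim Δx Δxφ)
    = (NΨx.mulVec Δx + NΨxφ.mulVec Δxφ) ⬝ᵥ (NΨx.mulVec Δx + NΨxφ.mulVec Δxφ)
        - L ^ 2 * (Δx ⬝ᵥ Δx) := by
  rw [Matrix.fromBlocks_mulVec]
  simp only [Sum.elim_comp_inl, Sum.elim_comp_inr]
  rw [sumElim_dotProduct_sumElim]
  simp only [Matrix.sub_mulVec, ← Matrix.mulVec_mulVec, Matrix.smul_mulVec,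
    Matrix.one_mulVec, dotProduct_add, dotProduct_sub, dotProduct_smul,
    Matrix.dotProduct_mulVec _ (Matrix.transpose _), Matrix.vecMul_transpose,
    add_dotProduct, smul_eq_mul]
  rw [dotProduct_comm (NΨxφ.mulVec Δxφ) (NΨx.mulVec Δx)]
  ring

lemma lipsdp_A_mulVec {n p : ℕ} (Nvx : Matrix (Fin p) (Fin n) ℝ)
    (Nvxφ : Matrix (Fin p) (Fin p) ℝ) (Δx : Fin n → ℝ) (Δxφ : Fin p → ℝ) :
    (Matrix.fromBlocks Nvx Nvxφ (0 : Matrix (Fin p) (Fin n) ℝ)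
      (1 : Matrix (Fin p) (Fin p) ℝ)).mulVec (Sum.elim Δx Δxφ)
    = Sum.elim (Nvx.mulVec Δx + Nvxφ.mulVec Δxφ) Δxφ := by
  rw [Matrix.fromBlocks_mulVec]
  simp

lemma lipsdp_slope_prod (α β : ℝ) (ψ : ℝ → ℝ)
    (hψ : ∀ s t : ℝ, t ≤ s → α * (s - t) ≤ ψ s - ψ t ∧ ψ s - ψ t ≤ β * (s - t))
    (s t : ℝ) : 0 ≤ (ψ s - ψ t - α * (s - t)) * (β * (s - t) - (ψ s - ψ t)) := by
  rcases le_total t s with h | h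
  · obtain ⟨h1, h2⟩ := hψ s t h
    exact mul_nonneg (by linarith) (by linarith)
  · obtain ⟨h1, h2⟩ := hψ t s h
    nlinarith

end LipSDPAux

/-- Euclidean norm of a finite real vector. -/
noncomputable def euclNorm {n : ℕ} (v : Fin n → ℝ) : ℝ :=
  Real.sqrt (∑ i, v i ^ 2)

lemma euclNorm_nonneg {k : ℕ} (x : Fin k → ℝ) : 0 ≤ euclNorm x :=
  Real.sqrt_nonneg _

lemma euclNorm_sq {k : ℕ} (x : Fin k → ℝ) : euclNorm x ^ 2 = ∑ i, x i ^ 2 :=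
  Real.sq_sqrt (Finset.sum_nonneg fun _ _ => sq_nonneg _)

lemma euclNorm_sq_eq_dot {k : ℕ} (x : Fin k → ℝ) : euclNorm x ^ 2 = x ⬝ᵥ x := by
  rw [euclNorm_sq]
  simp [dotProduct, pow_two]

/-- Soundness of the LipSDP certificate: if every increment pair
(Δx, Δx_φ) compatible with the slope-restriction quadratic constraint
satisfies the performance bound, then Ψ is L-Lipschitz; moreover, the
matrix inequality of Theorem 1 (LipSDP) implies that quadratic-constraint
implication, via the S-procedure. -/
theorem lipsdp_soundness
    (n p m : ℕ) (α β : ℝ) (hαβ : α ≤ β)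
    (ψ : ℝ → ℝ)
    (hψ : ∀ s t : ℝ, t ≤ s →
      α * (s - t) ≤ ψ s - ψ t ∧ ψ s - ψ t ≤ β * (s - t))
    (φ : (Fin p → ℝ) → (Fin p → ℝ)) (hφ : ∀ z i, φ z i = ψ (z i))
    (Nvx : Matrix (Fin p) (Fin n) ℝ) (Nvxφ : Matrix (Fin p) (Fin p) ℝ)
    (NΨx : Matrix (Fin m) (Fin n) ℝ) (NΨxφ : Matrix (Fin m) (Fin p) ℝ)
    (bφ : Fin p → ℝ) (b : Fin m → ℝ)
    (v : (Fin n → ℝ) → (Fin p → ℝ))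
    (hv : ∀ x, v x = Nvx.mulVec x + Nvxφ.mulVec (φ (v x)) + bφ)
    (Ψ : (Fin n → ℝ) → (Fin m → ℝ))
    (hΨ : ∀ x, Ψ x = NΨx.mulVec x + NΨxφ.mulVec (φ (v x)) + b)
    (L : ℝ) (hL : 0 < L)
    (lam : Fin p → ℝ) (hlam : ∀ i, 0 ≤ lam i)
    (T : Matrix (Fin p) (Fin p) ℝ) (hT : T = Matrix.diagonal lam) :
    -- the quadratic-constraint implication suffices for L-Lipschitzness:
    ((∀ Δx : Fin n → ℝ, ∀ Δxφ : Fin p → ℝ,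
        0 ≤ Sum.elim (Nvx.mulVec Δx + Nvxφ.mulVec Δxφ) Δxφ ⬝ᵥ
            (Matrix.fromBlocks ((-2 * α * β) • T) ((α + β) • T)
              ((α + β) • T) ((-2 : ℝ) • T)).mulVec
            (Sum.elim (Nvx.mulVec Δx + Nvxφ.mulVec Δxφ) Δxφ) →
        euclNorm (NΨx.mulVec Δx + NΨxφ.mulVec Δxφ) ^ 2 ≤
          L ^ 2 * euclNorm Δx ^ 2) →
      ∀ u w : Fin n → ℝ, euclNorm (Ψ u - Ψ w) ≤ L * euclNorm (u - w)) ∧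
    -- and the LipSDP matrix inequality of Theorem 1 implies that implication:
    ((-((Matrix.fromBlocks Nvx Nvxφ (0 : Matrix (Fin p) (Fin n) ℝ)
          (1 : Matrix (Fin p) (Fin p) ℝ))ᵀ *
        Matrix.fromBlocks ((-2 * α * β) • T) ((α + β) • T)
          ((α + β) • T) ((-2 : ℝ) • T) *
        Matrix.fromBlocks Nvx Nvxφ (0 : Matrix (Fin p) (Fin n) ℝ)
          (1 : Matrix (Fin p) (Fin p) ℝ) +
        Matrix.fromBlocks (NΨxᵀ * NΨx - (L ^ 2) • (1 : Matrix (Fin n) (Fin n) ℝ))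
          (NΨxᵀ * NΨxφ) (NΨxφᵀ * NΨx) (NΨxφᵀ * NΨxφ))).PosSemidef →
      ∀ Δx : Fin n → ℝ, ∀ Δxφ : Fin p → ℝ,
        0 ≤ Sum.elim (Nvx.mulVec Δx + Nvxφ.mulVec Δxφ) Δxφ ⬝ᵥ
            (Matrix.fromBlocks ((-2 * α * β) • T) ((α + β) • T)
              ((α + β) • T) ((-2 : ℝ) • T)).mulVec
            (Sum.elim (Nvx.mulVec Δx + Nvxφ.mulVec Δxφ) Δxφ) →
        euclNorm (NΨx.mulVec Δx + NΨxφ.mulVec Δxφ) ^ 2 ≤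
          L ^ 2 * euclNorm Δx ^ 2) := by
  subst hT
  constructor
  · -- Part 1: the quadratic-constraint implication implies Lipschitzness
    intro himp u w
    set Δx : Fin n → ℝ := u - w with hΔx
    set Δxφ : Fin p → ℝ := φ (v u) - φ (v w) with hΔxφ
    have hΔv : Nvx.mulVec Δx + Nvxφ.mulVec Δxφ = v u - v w := by
      conv_rhs => rw [hv u, hv w]
      simp only [hΔx, hΔxφ, Matrix.mulVec_sub]
      abel
    have hQC : 0 ≤ Sum.elim (Nvx.mulVec Δx + Nvxφ.mulVec Δxφ) Δxφ ⬝ᵥ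
        (Matrix.fromBlocks ((-2 * α * β) • Matrix.diagonal lam)
          ((α + β) • Matrix.diagonal lam) ((α + β) • Matrix.diagonal lam)
          ((-2 : ℝ) • Matrix.diagonal lam)).mulVec
        (Sum.elim (Nvx.mulVec Δx + Nvxφ.mulVec Δxφ) Δxφ) := by
      rw [lipsdp_qform_eq, hΔv]
      apply Finset.sum_nonneg
      intro i _
      have hs := lipsdp_slope_prod α β ψ hψ (v u i) (v w i)
      have hc : Δxφ i = ψ (v u i) - ψ (v w i) := by
        simp [hΔxφ, hφ]
      have ha : (v u - v w) i = v u i - v w i := rfl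
      rw [ha, hc]
      have := mul_nonneg (hlam i) hs
      nlinarith
    have hbound := himp Δx Δxφ hQC
    have hΨdiff : Ψ u - Ψ w = NΨx.mulVec Δx + NΨxφ.mulVec Δxφ := by
      rw [hΨ u, hΨ w]
      simp only [hΔx, hΔxφ, Matrix.mulVec_sub]
      abel
    rw [hΨdiff]
    have h1 : 0 ≤ euclNorm (NΨx.mulVec Δx + NΨxφ.mulVec Δxφ) := euclNorm_nonneg _
    have h2 : 0 ≤ L * euclNorm Δx := mul_nonneg hL.le (euclNorm_nonneg _)
    nlinarith [hbound, h1, h2]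
  · -- Part 2: the S-procedure step
    intro hPSD Δx Δxφ hQC
    set z : Fin n ⊕ Fin p → ℝ := Sum.elim Δx Δxφ with hz
    have h0 := hPSD.dotProduct_mulVec_nonneg z
    rw [show (star z) = z from rfl] at h0
    rw [Matrix.neg_mulVec, dotProduct_neg, Matrix.add_mulVec, dotProduct_add] at h0
    have hA : ((Matrix.fromBlocks Nvx Nvxφ (0 : Matrix (Fin p) (Fin n) ℝ)
          (1 : Matrix (Fin p) (Fin p) ℝ))ᵀ *
        Matrix.fromBlocks ((-2 * α * β) • Matrix.diagonal lam)
          ((α + β) • Matrix.diagonal lam) ((α + β) • Matrix.diagonal lam)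
          ((-2 : ℝ) • Matrix.diagonal lam) *
        Matrix.fromBlocks Nvx Nvxφ (0 : Matrix (Fin p) (Fin n) ℝ)
          (1 : Matrix (Fin p) (Fin p) ℝ)).mulVec z
        = (Matrix.fromBlocks Nvx Nvxφ 0 1)ᵀ.mulVec
            ((Matrix.fromBlocks ((-2 * α * β) • Matrix.diagonal lam)
              ((α + β) • Matrix.diagonal lam) ((α + β) • Matrix.diagonal lam)
              ((-2 : ℝ) • Matrix.diagonal lam)).mulVec
              (Sum.elim (Nvx.mulVec Δx + Nvxφ.mulVec Δxφ) Δxφ)) := by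
      rw [mul_assoc, ← Matrix.mulVec_mulVec, ← Matrix.mulVec_mulVec,
        hz, lipsdp_A_mulVec]
    rw [hA, Matrix.dotProduct_mulVec _ (Matrix.transpose _),
      Matrix.vecMul_transpose, hz, lipsdp_A_mulVec,
      lipsdp_perf_form] at h0
    rw [euclNorm_sq_eq_dot, euclNorm_sq_eq_dot]
    linarith [hQC, h0]
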